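/- arXiv:1412.6822 — 2 statements merged into one kernel-verified Lean document; each statement's English description precedes it below -/
import Mathlib

section
/- For every n ∈ ℕ and every letter s ∈ {x,y,z}, the word p⁽ⁿ⁾ s p⁽ⁿ⁾ is a factor of η. Consequently, for each s ∈ {x,y,z} the two-sided sequence ω⁽ˢ⁾ belongs to Ω_τ, and it is the unique element ω of Ω_τ such that ω(0) = s and, for every n ∈ ℕ, both ω(1)ω(2)⋯ω(2ⁿ⁺¹−1) = p⁽ⁿ⁾ and ω(−2ⁿ⁺¹+1)⋯ω(−1) = p⁽ⁿ⁾. -/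
/-- The four-letter alphabet `A = {a, x, y, z}`. -/
inductive A : Type
  | a | x | y | z
  deriving DecidableEq, Repr

/-- The substitution `τ : a ↦ axa, x ↦ y, y ↦ z, z ↦ x`. -/
def tau : A → List A
  | A.a => [A.a, A.x, A.a]
  | A.x => [A.y]
  | A.y => [A.z]
  | A.z => [A.x]

/-- The substitution `τ` extended to finite words by concatenation. -/
def tauW (w : List A) : List A := w.flatMap tau

/-- `pw n = τⁿ(a)`, a word of length `2^(n+1) - 1`. -/
def pw : ℕ → List A
  | 0 => [A.a]
  | n + 1 => tauW (pw n)

/-- The fixed point `η` of `τ`: the unique one-sided infinite word having every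
`τⁿ(a)` as a prefix.  (Since `pw (n+1)` has length `2^(n+2) - 1 > n`, reading its
`n`-th letter is well defined and independent of the choice of a large enough iterate.) -/
def eta (n : ℕ) : A := (pw (n + 1)).getD n A.a

/-- `w` is a (finite) factor of `η`. -/
def IsFactorEta (w : List A) : Prop :=
  ∃ i : ℕ, w = (List.range w.length).map (fun k => eta (i + k))

/-- `Ω_τ`: the set of two-sided sequences all of whose finite factors are factors of `η`. -/
def OmegaTau (ω : ℤ → A) : Prop :=
  ∀ (i : ℤ) (n : ℕ), IsFactorEta ((List.range n).map (fun k => ω (i + k)))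

/-- The special two-sided sequence `ω⁽ˢ⁾`, with `ω⁽ˢ⁾(0) = s` and
`ω⁽ˢ⁾(k) = η(|k| - 1)` for `k ≠ 0`. -/
def omegaS (s : A) : ℤ → A := fun k => if k = 0 then s else eta (k.natAbs - 1)

/-! Since `τ(a) = axa` and `τ` cycles `x → y → z → x`, `τⁿ⁺¹(a) = τⁿ(a) τⁿ(x) τⁿ(a)`, where the
letter `τⁿ(x)` runs periodically through `x, y, z`. As `τᵐ(a)` is both a prefix and a suffix of
`τⁿ(a)` for `m ≤ n`, every `p⁽ᵐ⁾ s p⁽ᵐ⁾` occurs in some `p⁽ⁿ⁺¹⁾`, hence in `η`. Because `p⁽ⁿ⁾` is a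
palindrome, the window of `ω⁽ˢ⁾` of radius `|p⁽ⁿ⁾|` around `0` is exactly `p⁽ⁿ⁾ s p⁽ⁿ⁾`; this gives
`ω⁽ˢ⁾ ∈ Ω_τ`, and the same windows pin down any `ω` with the prescribed centre and sides. -/

/-- The letter `τⁿ(x)`, so that `τⁿ⁺¹(a) = τⁿ(a) τⁿ(x) τⁿ(a)`. -/
def spacer : ℕ → A
  | 0 => A.x
  | 1 => A.y
  | 2 => A.z
  | n + 3 => spacer n

theorem tau_spacer : ∀ n, tau (spacer n) = [spacer (n + 1)]
  | 0 => rfl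
  | 1 => rfl
  | 2 => rfl
  | n + 3 => tau_spacer n

theorem spacer_three_mul_add (k i : ℕ) : spacer (3 * k + i) = spacer i := by
  induction k with
  | zero => simp
  | succ k ih => rw [show 3 * (k + 1) + i = 3 * k + i + 3 by ring, ← ih]; rfl

theorem exists_le_spacer_eq (n : ℕ) {s : A} (hs : s ∈ ({A.x, A.y, A.z} : Set A)) :
    ∃ m, n ≤ m ∧ spacer m = s := by
  obtain ⟨i, hi⟩ : ∃ i, spacer i = s := by
    rcases hs with rfl | rfl | rfl
    exacts [⟨0, rfl⟩, ⟨1, rfl⟩, ⟨2, rfl⟩]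
  exact ⟨3 * n + i, by omega, by rw [spacer_three_mul_add, hi]⟩

theorem tauW_append (u v : List A) : tauW (u ++ v) = tauW u ++ tauW v :=
  List.flatMap_append

theorem pw_succ (n : ℕ) : pw (n + 1) = pw n ++ [spacer n] ++ pw n := by
  induction n with
  | zero => rfl
  | succ n ih =>
    calc pw (n + 2) = tauW (pw n ++ [spacer n] ++ pw n) := by rw [← ih]; rfl
      _ = pw (n + 1) ++ [spacer (n + 1)] ++ pw (n + 1) := by
        simp only [tauW_append, pw]
        simp [tauW, tau_spacer]

theorem length_pw (n : ℕ) : (pw n).length = 2 ^ (n + 1) - 1 := by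
  induction n with
  | zero => rfl
  | succ n ih =>
    rw [pw_succ, List.length_append, List.length_append, ih, List.length_singleton]
    have : 1 ≤ 2 ^ (n + 1) := Nat.one_le_two_pow
    rw [pow_succ]
    omega

theorem neg_two_pow_add_one_eq_neg_length_pw (n : ℕ) :
    -(2 ^ (n + 1) : ℤ) + 1 = -((pw n).length : ℤ) := by
  rw [length_pw, Nat.cast_sub Nat.one_le_two_pow]
  push_cast
  ring

theorem lt_length_pw (n : ℕ) : n < (pw n).length := by
  induction n with
  | zero => simp [pw]
  | succ n ih => simp only [pw_succ, List.length_append, List.length_singleton]; omega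

theorem reverse_pw (n : ℕ) : (pw n).reverse = pw n := by
  induction n with
  | zero => rfl
  | succ n ih => simp [pw_succ, ih]

theorem pw_prefix_pw {m n : ℕ} (h : m ≤ n) : pw m <+: pw n := by
  induction n, h using Nat.le_induction with
  | base => exact List.prefix_refl _
  | succ n _ ih => exact ih.trans (by rw [pw_succ, List.append_assoc]; exact List.prefix_append _ _)

theorem pw_suffix_pw {m n : ℕ} (h : m ≤ n) : pw m <:+ pw n :=
  List.reverse_prefix.mp (by simpa only [reverse_pw] using pw_prefix_pw h)

theorem getElem_pw {n k : ℕ} (h : k < (pw n).length) : (pw n)[k] = eta k := by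
  have hk : k < (pw (k + 1)).length := (Nat.lt_succ_self k).trans (lt_length_pw _)
  rw [eta, List.getD_eq_getElem _ _ hk, (pw_prefix_pw (le_max_left n (k + 1))).getElem h,
    (pw_prefix_pw (le_max_right n (k + 1))).getElem hk]

theorem map_eta_range_length_pw (n : ℕ) : (List.range (pw n).length).map eta = pw n :=
  List.ext_getElem (by simp) fun k _ h => by simp [getElem_pw h]

theorem pw_spacer_pw_infix_pw_succ {m n : ℕ} (h : m ≤ n) :
    pw m ++ [spacer n] ++ pw m <:+: pw (n + 1) := by
  obtain ⟨u, hu⟩ := pw_suffix_pw h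
  obtain ⟨v, hv⟩ := pw_prefix_pw h
  refine ⟨u, v, ?_⟩
  rw [pw_succ]
  nth_rw 1 [← hu]
  rw [← hv]
  simp

theorem isFactorEta_of_infix_pw {w : List A} {n : ℕ} (h : w <:+: pw n) : IsFactorEta w := by
  obtain ⟨i, hlen, hw⟩ := List.infix_iff_getElem?.mp h
  refine ⟨i, List.ext_getElem (by simp) fun k hk _ => ?_⟩
  have hki : k + i < (pw n).length := by omega
  have hwk := hw k hk
  rw [List.getElem?_eq_getElem hki, getElem_pw hki, Option.some_inj] at hwk
  simp [← hwk, Nat.add_comm]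

theorem exists_pw_s_pw_infix_pw (n : ℕ) {s : A} (hs : s ∈ ({A.x, A.y, A.z} : Set A)) :
    ∃ M, pw n ++ [s] ++ pw n <:+: pw M := by
  obtain ⟨m, hnm, rfl⟩ := exists_le_spacer_eq n hs
  exact ⟨m + 1, pw_spacer_pw_infix_pw_succ hnm⟩

def window (ω : ℤ → A) (i : ℤ) (n : ℕ) : List A :=
  (List.range n).map fun k : ℕ => ω (i + k)

section window

variable (ω : ℤ → A)

/-- `(List.range n).map (fun k => ω (i + k))` elaborates with `k : ℤ`, through the monadic
coercion `List ℕ → List ℤ`; this turns such lists into windows. -/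
theorem map_coe_range_eq_window (i : ℤ) (n : ℕ) :
    List.map (fun k => ω (i + k)) ((List.range n : List ℕ) : List ℤ) = window ω i n := by
  change List.map _ ((List.range n).flatMap fun k : ℕ => [(k : ℤ)]) = _
  rw [← List.map_eq_flatMap, List.map_map]
  rfl

theorem omegaTau_iff : OmegaTau ω ↔ ∀ i n, IsFactorEta (window ω i n) := by
  simp only [OmegaTau, map_coe_range_eq_window]

@[simp] theorem length_window (i : ℤ) (n : ℕ) : (window ω i n).length = n := by
  simp [window]

@[simp] theorem getElem_window (i : ℤ) (n k : ℕ) (h : k < (window ω i n).length) :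
    (window ω i n)[k] = ω (i + k) := by
  simp [window]

theorem window_add (i : ℤ) (m n : ℕ) :
    window ω i (m + n) = window ω i m ++ window ω (i + m) n := by
  simp [window, List.range_add, Function.comp_def, add_assoc]

theorem window_infix_window {i j : ℤ} {m n : ℕ} (hji : j ≤ i) (h : i + n ≤ j + m) :
    window ω i n <:+: window ω j m := by
  obtain ⟨a, rfl⟩ : ∃ a : ℕ, i = j + a := ⟨(i - j).toNat, by omega⟩
  obtain ⟨b, rfl⟩ : ∃ b : ℕ, m = a + n + b := ⟨m - a - n, by omega⟩
  rw [window_add, window_add]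
  exact List.infix_append _ _ _

theorem window_centered_eq_append {s : A} (h0 : ω 0 = s) (n : ℕ) :
    window ω (-n) (n + 1 + n) = window ω (-n) n ++ [s] ++ window ω 1 n := by
  rw [window_add, window_add]
  simp [window, h0]

end window

theorem window_omegaS_one (s : A) (n : ℕ) :
    window (omegaS s) 1 n = (List.range n).map eta :=
  List.ext_getElem (by simp) fun k _ _ => by
    simp only [getElem_window, omegaS, List.getElem_map, List.getElem_range]
    rw [if_neg (by omega)]
    congr 1
    omega

theorem window_omegaS_neg (s : A) (n : ℕ) :
    window (omegaS s) (-n) n = ((List.range n).map eta).reverse :=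
  List.ext_getElem (by simp) fun k hk _ => by
    simp only [length_window] at hk
    simp only [getElem_window, omegaS, List.getElem_reverse, List.getElem_map,
      List.getElem_range, List.length_map, List.length_range]
    rw [if_neg (by omega)]
    congr 1
    omega

theorem omegaS_sides (s : A) (n : ℕ) :
    window (omegaS s) 1 (pw n).length = pw n ∧
      window (omegaS s) (-(pw n).length) (pw n).length = pw n := by
  rw [window_omegaS_one, window_omegaS_neg, map_eta_range_length_pw, reverse_pw]
  exact ⟨rfl, rfl⟩

theorem window_omegaS_pw (s : A) (n : ℕ) :
    window (omegaS s) (-(pw n).length) ((pw n).length + 1 + (pw n).length) =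
      pw n ++ [s] ++ pw n := by
  obtain ⟨hr, hl⟩ := omegaS_sides s n
  rw [window_centered_eq_append _ (if_pos rfl), hl, hr]

theorem omegaTau_omegaS {s : A} (hs : s ∈ ({A.x, A.y, A.z} : Set A)) :
    OmegaTau (omegaS s) := by
  refine (omegaTau_iff _).mpr fun i n => ?_
  set N := (pw (i.natAbs + n)).length
  have hN : i.natAbs + n < N := lt_length_pw _
  obtain ⟨M, hM⟩ := exists_pw_s_pw_infix_pw (i.natAbs + n) hs
  refine isFactorEta_of_infix_pw (.trans ?_ hM)
  rw [← window_omegaS_pw]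
  exact window_infix_window _ (by omega) (by omega)

theorem eq_omegaS_of_sides {s : A} {ω : ℤ → A} (h0 : ω 0 = s)
    (h : ∀ n, window ω 1 (pw n).length = pw n ∧
      window ω (-(pw n).length) (pw n).length = pw n) :
    ω = omegaS s := by
  funext j
  set N := (pw j.natAbs).length
  have hN : j.natAbs < N := lt_length_pw _
  have hwin : window ω (-N) (N + 1 + N) = window (omegaS s) (-N) (N + 1 + N) := by
    rw [window_omegaS_pw, window_centered_eq_append _ h0, (h _).1, (h _).2]
  have hk : (j + N).toNat < (window ω (-N) (N + 1 + N)).length := by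
    rw [length_window]; omega
  have hj := List.getElem_of_eq hwin hk
  simp only [getElem_window] at hj
  rwa [show -(N : ℤ) + ((j + N).toNat : ℕ) = j by omega] at hj

/-- For every `n` and every `s ∈ {x,y,z}`, the word `p⁽ⁿ⁾ s p⁽ⁿ⁾` is a factor of `η`;
consequently `ω⁽ˢ⁾` belongs to `Ω_τ` and is the unique element `ω` of `Ω_τ` with
`ω(0) = s`, `ω(1)⋯ω(2^(n+1)-1) = p⁽ⁿ⁾` and `ω(-2^(n+1)+1)⋯ω(-1) = p⁽ⁿ⁾` for all `n`. -/
theorem special_words_omegaS :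
    (∀ (n : ℕ) (s : A), s ∈ ({A.x, A.y, A.z} : Set A) →
      IsFactorEta (pw n ++ [s] ++ pw n)) ∧
    (∀ s ∈ ({A.x, A.y, A.z} : Set A),
      OmegaTau (omegaS s) ∧
      omegaS s 0 = s ∧
      (∀ n : ℕ,
        (List.range (2 ^ (n + 1) - 1)).map (fun k => omegaS s (1 + k)) = pw n ∧
        (List.range (2 ^ (n + 1) - 1)).map
            (fun k => omegaS s (-(2 ^ (n + 1) : ℤ) + 1 + k)) = pw n) ∧
      (∀ ω : ℤ → A, OmegaTau ω → ω 0 = s →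
        (∀ n : ℕ,
          (List.range (2 ^ (n + 1) - 1)).map (fun k => ω (1 + k)) = pw n ∧
          (List.range (2 ^ (n + 1) - 1)).map
              (fun k => ω (-(2 ^ (n + 1) : ℤ) + 1 + k)) = pw n) →
        ω = omegaS s)) := by
  simp only [map_coe_range_eq_window, neg_two_pow_add_one_eq_neg_length_pw, ← length_pw]
  refine ⟨fun n s hs => ?_, fun s hs => ⟨omegaTau_omegaS hs, if_pos rfl, omegaS_sides s,
    fun ω _ h0 h => eq_omegaS_of_sides h0 h⟩⟩
  obtain ⟨M, hM⟩ := exists_pw_s_pw_infix_pw n hs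
  exact isFactorEta_of_infix_pw hM
end

section
/- Let ω ∈ Ω_τ and let ω̃ be its reflection, ω̃(n) := ω(1−n). If the shift-orbits of ω and ω̃ intersect, i.e., if there exist integers n, m with Tⁿω = Tᵐω̃, then ω is symmetric around some point: there exist p ∈ ℤ and s ∈ {x,y,z} such that ω(n) = ω⁽ˢ⁾(n−p) for all n ∈ ℤ. -/
/-!
Write `ν` for the 2-adic valuation. In closed form `η(2k) = a`, and `η(2k+1)` is `x`, `y` or `z`
according as `ν(k+1) ≡ 0, 1, 2 (mod 3)`; in particular consecutive letters of `η` differ.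

If `Tⁿω = Tᵐω̃`, then `ω` is a palindrome about the half-integer `(1+n-m)/2`, and since `ω` has
no two equal consecutive letters its centre `c` is an integer. Every window of `ω` around `c` is a
palindrome of `η`. If `ω(c) = a`, the window of radius 3 sits at some `2q` with `ν(q) ≡ ν(q+1)` and
`ν(q-1) ≡ ν(q+2) (mod 3)`, which is impossible modulo 8. So `ω(c)` sits at an odd position `2N-1`,
and `ν(N+r) ≡ ν(N-r) (mod 3)` for all `r ≤ 3e` forces `e < 2^ν(N)`: otherwise, writing
`N = 2^u M`, one of `r = 2^u, 3·2^u` violates it. Hence `ν(N+e) = ν(e)`, which says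
`ω(c+2e) = η(2e-1)`; the letters at odd distance from `c` are all `a`.
-/

def cycleLetter (v : ℕ) : A := if v % 3 = 0 then A.x else if v % 3 = 1 then A.y else A.z

lemma cycleLetter_ne_a (v : ℕ) : cycleLetter v ≠ A.a := by
  unfold cycleLetter; split_ifs <;> decide

lemma cycleLetter_eq_iff {u v : ℕ} : cycleLetter u = cycleLetter v ↔ u % 3 = v % 3 := by
  unfold cycleLetter; split_ifs <;> simp <;> omega

lemma tau_cycleLetter (v : ℕ) : tau (cycleLetter v) = [cycleLetter (v + 1)] := by
  unfold cycleLetter; split_ifs <;> first | rfl | omega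

def etaClosed (n : ℕ) : A :=
  if Even n then A.a else cycleLetter (padicValNat 2 ((n + 1) / 2))

lemma etaClosed_two_mul (k : ℕ) : etaClosed (2 * k) = A.a := by
  simp [etaClosed]

lemma etaClosed_two_mul_add_one (k : ℕ) :
    etaClosed (2 * k + 1) = cycleLetter (padicValNat 2 (k + 1)) := by
  simp [etaClosed, show (2 * k + 1 + 1) / 2 = k + 1 by omega]

lemma tau_etaClosed_two_mul (k : ℕ) :
    tau (etaClosed (2 * k)) =
      [etaClosed (4 * k), etaClosed (4 * k + 1), etaClosed (4 * k + 2)] := by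
  rw [show 4 * k = 2 * (2 * k) by ring, show 2 * (2 * k) + 2 = 2 * (2 * k + 1) by ring,
    etaClosed_two_mul, etaClosed_two_mul, etaClosed_two_mul, etaClosed_two_mul_add_one,
    padicValNat.eq_zero_of_not_dvd (by omega)]
  rfl

lemma tau_etaClosed_two_mul_add_one (k : ℕ) :
    tau (etaClosed (2 * k + 1)) = [etaClosed (4 * k + 3)] := by
  rw [show 4 * k + 3 = 2 * (2 * k + 1) + 1 by ring, etaClosed_two_mul_add_one,
    etaClosed_two_mul_add_one, tau_cycleLetter, show 2 * k + 1 + 1 = 2 * (k + 1) by ring,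
    padicValNat.mul two_ne_zero (by omega), padicValNat.self one_lt_two, add_comm]

lemma tauW_map_etaClosed_range (j : ℕ) :
    tauW ((List.range (2 * j + 1)).map etaClosed) = (List.range (4 * j + 3)).map etaClosed := by
  induction j with
  | zero => simp [tauW, tau_etaClosed_two_mul 0, List.range_succ]
  | succ j ih =>
    rw [show 2 * (j + 1) + 1 = 2 * j + 1 + 2 by ring, show 4 * (j + 1) + 3 = 4 * j + 3 + 4 by ring,
      List.range_add (n := 2 * j + 1), List.range_add (n := 4 * j + 3), List.map_append,
      List.map_append, tauW, List.flatMap_append, ← tauW, ih]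
    congr 1
    simp [List.range_succ, tau_etaClosed_two_mul_add_one, show 2 * j + 1 + 1 = 2 * (j + 1) by ring,
      tau_etaClosed_two_mul, show 4 * (j + 1) = 4 * j + 3 + 1 by ring]

lemma pw_eq_map_etaClosed (n : ℕ) : pw n = (List.range (2 ^ (n + 1) - 1)).map etaClosed := by
  induction n with
  | zero => simp [pw, etaClosed]
  | succ n ih =>
    have hpow : 1 ≤ 2 ^ n := Nat.one_le_two_pow
    rw [pw, ih, show 2 ^ (n + 1) - 1 = 2 * (2 ^ n - 1) + 1 by rw [pow_succ]; omega,
      tauW_map_etaClosed_range, show 2 ^ (n + 1 + 1) - 1 = 4 * (2 ^ n - 1) + 3 by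
        rw [pow_succ, pow_succ]; omega]

lemma eta_eq_etaClosed (n : ℕ) : eta n = etaClosed n := by
  have hn : n < 2 ^ (n + 2) - 1 := by
    have := Nat.lt_two_pow_self (n := n + 2)
    omega
  rw [eta, pw_eq_map_etaClosed, List.getD_eq_getElem _ _ (by simpa using hn)]
  simp

lemma eta_two_mul (k : ℕ) : eta (2 * k) = A.a := by
  rw [eta_eq_etaClosed, etaClosed_two_mul]

lemma eta_two_mul_add_one (k : ℕ) : eta (2 * k + 1) = cycleLetter (padicValNat 2 (k + 1)) := by
  rw [eta_eq_etaClosed, etaClosed_two_mul_add_one]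

lemma eta_eq_a_iff (n : ℕ) : eta n = A.a ↔ Even n := by
  obtain ⟨k, rfl | rfl⟩ := Nat.even_or_odd' n
  · simp [eta_two_mul]
  · simp [eta_two_mul_add_one, cycleLetter_ne_a]

lemma eta_succ_ne (n : ℕ) : eta (n + 1) ≠ eta n := by
  intro h
  have := congrArg (· = A.a) h
  simp only [eq_iff_iff, eta_eq_a_iff, Nat.even_add_one] at this
  tauto

lemma padicValNat_eq_of_dvd_of_not_dvd {p n u : ℕ} [Fact p.Prime] (h : p ^ u ∣ n)
    (h' : ¬p ^ (u + 1) ∣ n) : padicValNat p n = u := by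
  have hn : n ≠ 0 := by rintro rfl; exact h' (dvd_zero _)
  rw [padicValNat_dvd_iff_le hn] at h h'
  omega

lemma padicValNat_add_of_pow_succ_dvd {p N r : ℕ} [Fact p.Prime] (hr : r ≠ 0)
    (hN : p ^ (padicValNat p r + 1) ∣ N) : padicValNat p (N + r) = padicValNat p r :=
  padicValNat_eq_of_dvd_of_not_dvd
    (dvd_add ((pow_dvd_pow p (Nat.le_succ _)).trans hN) pow_padicValNat_dvd)
    fun h => pow_succ_padicValNat_not_dvd hr ((Nat.dvd_add_right hN).mp h)

lemma padicValNat_two_eq_of_mod_pow_succ {n u : ℕ} (h : n % 2 ^ (u + 1) = 2 ^ u) :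
    padicValNat 2 n = u := by
  have hn : n = 2 ^ (u + 1) * (n / 2 ^ (u + 1)) + 2 ^ u := by
    rw [← h, Nat.div_add_mod]
  refine padicValNat_eq_of_dvd_of_not_dvd ?_ fun hdvd => ?_
  · rw [hn, pow_succ]
    exact dvd_add (dvd_mul_of_dvd_left (dvd_mul_right _ _) _) dvd_rfl
  · rw [Nat.dvd_iff_mod_eq_zero, h] at hdvd
    exact (pow_pos two_pos u).ne' hdvd

lemma eight_dvd_of_padicValNat_two_mod_three_eq_zero {n : ℕ} (hn : n ≠ 0) (h2 : 2 ∣ n)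
    (h : padicValNat 2 n % 3 = 0) : 8 ∣ n := by
  have h1 : 1 ≤ padicValNat 2 n := (padicValNat_dvd_iff_le hn).mp (by simpa using h2)
  exact (padicValNat_dvd_iff_le hn).mpr (by omega : 3 ≤ padicValNat 2 n)

lemma padicValNat_two_mod_three_ne_of_odd {M : ℕ} (hM : Odd M) (h3 : 3 ≤ M) :
    ∃ k, 1 ≤ k ∧ k ≤ 3 ∧ padicValNat 2 (M + k) % 3 ≠ padicValNat 2 (M - k) % 3 := by
  have v1 : ∀ n, n % 4 = 2 → padicValNat 2 n = 1 := fun _ h => padicValNat_two_eq_of_mod_pow_succ h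
  have v2 : ∀ n, n % 8 = 4 → padicValNat 2 n = 2 := fun _ h => padicValNat_two_eq_of_mod_pow_succ h
  obtain ⟨m, rfl⟩ := hM
  rcases (by omega : m % 4 = 0 ∨ m % 4 = 1 ∨ m % 4 = 2 ∨ m % 4 = 3) with h | h | h | h
  · exact ⟨3, by omega, le_rfl, by rw [v2 _ (by omega), v1 _ (by omega)]; decide⟩
  · exact ⟨1, le_rfl, by omega, by rw [v2 _ (by omega), v1 _ (by omega)]; decide⟩
  · exact ⟨1, le_rfl, by omega, by rw [v1 _ (by omega), v2 _ (by omega)]; decide⟩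
  · exact ⟨3, by omega, le_rfl, by rw [v1 _ (by omega), v2 _ (by omega)]; decide⟩

lemma padicValNat_two_mod_three_not_palindrome {q : ℕ} (hq : 2 ≤ q)
    (h : padicValNat 2 q % 3 = padicValNat 2 (q + 1) % 3) :
    padicValNat 2 (q - 1) % 3 ≠ padicValNat 2 (q + 2) % 3 := by
  have v0 : ∀ n, n % 2 = 1 → padicValNat 2 n = 0 := fun _ h => padicValNat_two_eq_of_mod_pow_succ h
  have v1 : ∀ n, n % 4 = 2 → padicValNat 2 n = 1 := fun _ h => padicValNat_two_eq_of_mod_pow_succ h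
  rcases Nat.even_or_odd q with hev | hodd
  · rw [v0 (q + 1) (Nat.odd_iff.mp hev.add_one)] at h
    have := eight_dvd_of_padicValNat_two_mod_three_eq_zero (by omega) hev.two_dvd h
    rw [v0 _ (by omega), v1 _ (by omega)]
    decide
  · rw [v0 q (Nat.odd_iff.mp hodd)] at h
    have := eight_dvd_of_padicValNat_two_mod_three_eq_zero (by omega) (hodd.add_one).two_dvd h.symm
    rw [v1 _ (by omega), v0 _ (by omega)]
    decide

lemma padicValNat_two_add_of_palindrome {N e : ℕ} (he : e ≠ 0) (hN : 3 * e < N)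
    (hpal : ∀ r, 1 ≤ r → r ≤ 3 * e →
      padicValNat 2 (N + r) % 3 = padicValNat 2 (N - r) % 3) :
    padicValNat 2 (N + e) = padicValNat 2 e := by
  have hN0 : N ≠ 0 := by omega
  obtain ⟨u, hu⟩ : ∃ u, padicValNat 2 N = u := ⟨_, rfl⟩
  suffices hlt : e < 2 ^ u by
    refine padicValNat_add_of_pow_succ_dvd he ((pow_dvd_pow 2 ?_).trans (hu ▸ pow_padicValNat_dvd))
    have := (Nat.pow_lt_pow_iff_right (by norm_num : 1 < 2)).mp
      ((Nat.le_of_dvd (Nat.pos_of_ne_zero he) pow_padicValNat_dvd).trans_lt hlt)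
    omega
  by_contra! hle
  obtain ⟨M, hNM⟩ : 2 ^ u ∣ N := hu ▸ pow_padicValNat_dvd
  have hndvd : ¬2 ^ (u + 1) ∣ N := hu ▸ pow_succ_padicValNat_not_dvd hN0
  have hModd : Odd M := by
    rw [← Nat.not_even_iff_odd]
    rintro ⟨M', rfl⟩
    exact hndvd ⟨M', by rw [hNM, pow_succ]; ring⟩
  have hM3 : 3 < M := by
    by_contra! h
    have : 2 ^ u * M ≤ 2 ^ u * 3 := Nat.mul_le_mul_left _ h
    omega
  obtain ⟨k, hk1, hk3, hne⟩ := padicValNat_two_mod_three_ne_of_odd hModd hM3.le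
  have hval : ∀ m, m ≠ 0 → padicValNat 2 (2 ^ u * m) = u + padicValNat 2 m := fun m hm => by
    rw [padicValNat.mul (by positivity) hm, padicValNat.prime_pow]
  have hr1 : 1 ≤ 2 ^ u * k := Nat.one_le_iff_ne_zero.mpr (by positivity)
  have hr3 : 2 ^ u * k ≤ 2 ^ u * 3 := Nat.mul_le_mul_left _ hk3
  have := hpal (2 ^ u * k) hr1 (by omega)
  rw [hNM, ← mul_add, ← Nat.mul_sub, hval _ (by omega), hval _ (by omega)] at this
  omega

lemma eta_ne_a_of_palindrome {t : ℕ} (ht : 3 ≤ t) (hpal : ∀ j ≤ 3, eta (t + j) = eta (t - j)) :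
    eta t ≠ A.a := by
  intro ha
  obtain ⟨q, rfl⟩ : ∃ q, t = 2 * q := ((eta_eq_a_iff t).mp ha).exists_two_nsmul _
  have h1 := hpal 1 (by norm_num)
  have h3 := hpal 3 le_rfl
  rw [show 2 * q - 1 = 2 * (q - 1) + 1 by omega, eta_two_mul_add_one, eta_two_mul_add_one,
    cycleLetter_eq_iff, show q - 1 + 1 = q by omega] at h1
  rw [show 2 * q - 3 = 2 * (q - 2) + 1 by omega, show 2 * q + 3 = 2 * (q + 1) + 1 by omega,
    eta_two_mul_add_one, eta_two_mul_add_one, cycleLetter_eq_iff,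
    show q - 2 + 1 = q - 1 by omega] at h3
  exact padicValNat_two_mod_three_not_palindrome (by omega) h1.symm h3.symm

lemma eta_add_of_palindrome {t d : ℕ} (ht : eta t ≠ A.a) (hdt : 6 * (d + 1) ≤ t)
    (hpal : ∀ j ≤ 6 * (d + 1), eta (t + j) = eta (t - j)) : eta (t + (d + 1)) = eta d := by
  obtain ⟨q, rfl⟩ : ∃ q, t = 2 * q + 1 :=
    (Nat.not_even_iff_odd.mp (mt (eta_eq_a_iff t).mpr ht)).exists_bit1
  obtain ⟨e, rfl | rfl⟩ := Nat.even_or_odd' d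
  · rw [show 2 * q + 1 + (2 * e + 1) = 2 * (q + e + 1) by ring, eta_two_mul, eta_two_mul]
  · have hpal' : ∀ r, 1 ≤ r → r ≤ 3 * (e + 1) →
        padicValNat 2 (q + 1 + r) % 3 = padicValNat 2 (q + 1 - r) % 3 := by
      intro r _ hr
      have := hpal (2 * r) (by omega)
      rwa [show 2 * q + 1 + 2 * r = 2 * (q + r) + 1 by ring,
        show 2 * q + 1 - 2 * r = 2 * (q - r) + 1 by omega, eta_two_mul_add_one,
        eta_two_mul_add_one, cycleLetter_eq_iff, show q + r + 1 = q + 1 + r by ring,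
        show q - r + 1 = q + 1 - r by omega] at this
    rw [show 2 * q + 1 + (2 * e + 1 + 1) = 2 * (q + e + 1) + 1 by ring, eta_two_mul_add_one,
      eta_two_mul_add_one, show q + e + 1 + 1 = q + 1 + (e + 1) by ring,
      padicValNat_two_add_of_palindrome (by omega) (by omega) hpal']

namespace OmegaTau

variable {ω : ℤ → A}

lemma exists_eta_window (hω : OmegaTau ω) (i : ℤ) (L : ℕ) :
    ∃ i₀ : ℕ, ∀ k < L, ω (i + k) = eta (i₀ + k) := by
  obtain ⟨i₀, hi⟩ := hω i L
  refine ⟨i₀, fun k hk => ?_⟩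
  -- `List.range n` enters `OmegaTau` coerced to `List ℤ` through the list monad.
  simp only [bind, pure, ← List.map_eq_flatMap, List.map_map, List.length_map,
    List.length_range] at hi
  simpa [hk] using congrArg (·[k]?) hi

lemma apply_add_one_ne (hω : OmegaTau ω) (i : ℤ) : ω (i + 1) ≠ ω i := by
  obtain ⟨i₀, hi⟩ := hω.exists_eta_window i 2
  have h0 := hi 0 (by norm_num)
  have h1 := hi 1 (by norm_num)
  simp only [Nat.cast_zero, add_zero, Nat.cast_one] at h0 h1
  rw [h0, h1]
  exact eta_succ_ne i₀

lemma exists_eta_palindrome (hω : OmegaTau ω) {c : ℤ} (hc : ∀ j : ℤ, ω (c + j) = ω (c - j))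
    (R : ℕ) : ∃ t, R ≤ t ∧ (∀ j ≤ R, ω (c + j) = eta (t + j)) ∧
      ∀ j ≤ R, eta (t + j) = eta (t - j) := by
  obtain ⟨i₀, hi⟩ := hω.exists_eta_window (c - R) (2 * R + 1)
  have hplus : ∀ j ≤ R, ω (c + j) = eta (i₀ + R + j) := fun j hj => by
    rw [add_assoc, ← hi (R + j) (by omega)]
    push_cast; ring_nf
  have hminus : ∀ j ≤ R, ω (c - j) = eta (i₀ + R - j) := fun j hj => by
    rw [show i₀ + R - j = i₀ + (R - j) by omega, ← hi (R - j) (by omega)]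
    push_cast [hj]; ring_nf
  exact ⟨i₀ + R, by omega, hplus, fun j hj => by rw [← hplus j hj, hc, hminus j hj]⟩

lemma apply_ne_a_of_palindrome (hω : OmegaTau ω) {c : ℤ} (hc : ∀ j : ℤ, ω (c + j) = ω (c - j)) :
    ω c ≠ A.a := by
  obtain ⟨t, ht, hwin, hpal⟩ := hω.exists_eta_palindrome hc 3
  have hct : ω c = eta t := by simpa using hwin 0 (by norm_num)
  exact hct ▸ eta_ne_a_of_palindrome ht hpal

lemma apply_add_of_palindrome (hω : OmegaTau ω) {c : ℤ} (hc : ∀ j : ℤ, ω (c + j) = ω (c - j))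
    (d : ℕ) : ω (c + (d + 1)) = eta d := by
  obtain ⟨t, ht, hwin, hpal⟩ := hω.exists_eta_palindrome hc (6 * (d + 1))
  have hct : ω c = eta t := by simpa using hwin 0 (by norm_num)
  have hta : eta t ≠ A.a := hct ▸ hω.apply_ne_a_of_palindrome hc
  rw [← eta_add_of_palindrome hta ht hpal, ← hwin (d + 1) (by omega)]
  push_cast; rfl

lemma exists_palindrome_centre (hω : OmegaTau ω)
    (h : ∃ n m : ℤ, ∀ k : ℤ, ω (k + n) = ω (1 - (k + m))) :
    ∃ c : ℤ, ∀ j : ℤ, ω (c + j) = ω (c - j) := by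
  obtain ⟨n, m, hnm⟩ := h
  have hrefl : ∀ j, ω j = ω (1 + n - m - j) := fun j => by
    rw [← sub_add_cancel j n, hnm]; ring_nf
  obtain ⟨c, hc | hc⟩ := Int.even_or_odd' (1 + n - m)
  · exact ⟨c, fun j => by rw [hrefl, hc]; ring_nf⟩
  · exact absurd (by rw [hrefl, hc]; ring_nf) (hω.apply_add_one_ne c)

end OmegaTau

lemma A.mem_xyz_of_ne_a {s : A} (hs : s ≠ A.a) : s ∈ ({A.x, A.y, A.z} : Set A) := by
  cases s <;> simp_all

lemma eq_omegaS_of_palindrome {ω : ℤ → A} {c : ℤ} (hc : ∀ j : ℤ, ω (c + j) = ω (c - j))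
    (hd : ∀ d : ℕ, ω (c + (d + 1)) = eta d) (n : ℤ) : ω n = omegaS (ω c) (n - c) := by
  obtain ⟨k, hk | hk⟩ := Int.eq_nat_or_neg (n - c) <;> rcases k with _ | d
  · simp [omegaS, show n = c by omega]
  · rw [hk, show n = c + (d + 1) by omega, hd]
    simp only [omegaS, if_neg (by omega : ((d + 1 : ℕ) : ℤ) ≠ 0), Int.natAbs_natCast,
      Nat.add_sub_cancel]
  · simp [omegaS, show n = c by omega]
  · rw [hk, show n = c - (d + 1) by omega, ← hc, hd]
    simp only [omegaS, if_neg (by omega : -((d + 1 : ℕ) : ℤ) ≠ 0), Int.natAbs_neg,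
      Int.natAbs_natCast, Nat.add_sub_cancel]

/-- If the shift-orbits of `ω ∈ Ω_τ` and of its reflection `ω̃(n) = ω(1-n)`
intersect, i.e. `Tⁿω = Tᵐω̃` for some integers `n, m`, then `ω` is symmetric
around a point: `ω = T^{-p} ω⁽ˢ⁾` for some `p ∈ ℤ` and `s ∈ {x,y,z}`. -/
theorem orbits_intersect_implies_symmetric (ω : ℤ → A) (hω : OmegaTau ω)
    (h : ∃ n m : ℤ, ∀ k : ℤ, ω (k + n) = ω (1 - (k + m))) :
    ∃ p : ℤ, ∃ s ∈ ({A.x, A.y, A.z} : Set A), ∀ n : ℤ, ω n = omegaS s (n - p) := by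
  obtain ⟨c, hc⟩ := hω.exists_palindrome_centre h
  refine ⟨c, ω c, ?_, eq_omegaS_of_palindrome hc (hω.apply_add_of_palindrome hc)⟩
  exact A.mem_xyz_of_ne_a (hω.apply_ne_a_of_palindrome hc)
end
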